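/- arXiv:2601.10753 — 2 statements merged into one kernel-verified Lean document; each statement's English description precedes it below -/
import Mathlib

section
/- For every s ∈ ℝ and every constant C > 0, any sequence (a^{(n)})_{n∈ℕ} of elements of ℓ²(ℤ) satisfying Σ_{k∈ℤ} (1+|k+1/2|²)^{s+1} |a^{(n)}_k|² ≤ C for all n has a subsequence that is Cauchy with respect to the norm given by (Σ_{k∈ℤ} (1+|k+1/2|²)^s |a_k|²)^{1/2}. -/
/-!
The weight `w k = 1 + |k + 1/2|²` tends to infinity, so `w ^ s ≤ δ * w ^ (s + 1)` off a finite
set for every `δ > 0`: the embedding of `ℓ²_{s+1}` into `ℓ²_s` is compact. A bounded sequence is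
bounded in every coordinate, so by Tychonoff in the countable product it has a coordinatewise
convergent subsequence. The squared `ℓ²_s`-distance of two of its terms is at most a sum over
finitely many coordinates, which tends to zero, plus `δ` times their squared
`ℓ²_{s+1}`-distance, which is at most `4 * C`.
-/

open Filter Topology

section WeightedSum

variable {ι E : Type*} [SeminormedAddCommGroup E] {u W : ι → ℝ}

theorem norm_le_sqrt_div_of_tsum_mul_norm_sq_le {x : ι → E} {C : ℝ} (hW : ∀ k, 0 < W k)
    (hs : Summable fun k => W k * ‖x k‖ ^ 2) (hC : ∑' k, W k * ‖x k‖ ^ 2 ≤ C) (k : ι) :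
    ‖x k‖ ≤ √(C / W k) := by
  have hk : W k * ‖x k‖ ^ 2 ≤ C :=
    (hs.le_tsum k fun j _ => mul_nonneg (hW j).le (sq_nonneg _)).trans hC
  exact Real.le_sqrt_of_sq_le ((le_div_iff₀' (hW k)).2 hk)

theorem exists_strictMono_tendsto_pi_of_norm_le [Countable ι] [ProperSpace E]
    (x : ℕ → ι → E) (R : ι → ℝ) (hR : ∀ n k, ‖x n k‖ ≤ R k) :
    ∃ y : ι → E, ∃ φ : ℕ → ℕ, StrictMono φ ∧ Tendsto (x ∘ φ) atTop (𝓝 y) := by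
  have hK : IsCompact (Set.univ.pi fun k => Metric.closedBall (0 : E) (R k)) :=
    isCompact_univ_pi fun k => isCompact_closedBall 0 (R k)
  obtain ⟨y, -, φ, hφ, hy⟩ := hK.isSeqCompact fun n k _ => mem_closedBall_zero_iff.2 (hR n k)
  exact ⟨y, φ, hφ, hy⟩

theorem mul_norm_sub_sq_le {w : ℝ} (hw : 0 ≤ w) (a b : E) :
    w * ‖a - b‖ ^ 2 ≤ 2 * (w * ‖a‖ ^ 2) + 2 * (w * ‖b‖ ^ 2) := by
  have h : ‖a - b‖ ^ 2 ≤ 2 * (‖a‖ ^ 2 + ‖b‖ ^ 2) :=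
    (pow_le_pow_left₀ (norm_nonneg _) (norm_sub_le a b) 2).trans add_sq_le
  nlinarith [mul_le_mul_of_nonneg_left h hw]

theorem summable_mul_norm_sub_sq (hW : ∀ k, 0 ≤ W k) {x y : ι → E}
    (hx : Summable fun k => W k * ‖x k‖ ^ 2) (hy : Summable fun k => W k * ‖y k‖ ^ 2) :
    Summable fun k => W k * ‖x k - y k‖ ^ 2 :=
  .of_nonneg_of_le (fun k => mul_nonneg (hW k) (sq_nonneg _))
    (fun k => mul_norm_sub_sq_le (hW k) _ _) ((hx.mul_left 2).add (hy.mul_left 2))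

theorem tsum_mul_norm_sub_sq_le (hW : ∀ k, 0 ≤ W k) {x y : ι → E} {C : ℝ}
    (hx : Summable fun k => W k * ‖x k‖ ^ 2) (hy : Summable fun k => W k * ‖y k‖ ^ 2)
    (hxC : ∑' k, W k * ‖x k‖ ^ 2 ≤ C) (hyC : ∑' k, W k * ‖y k‖ ^ 2 ≤ C) :
    ∑' k, W k * ‖x k - y k‖ ^ 2 ≤ 4 * C := by
  calc ∑' k, W k * ‖x k - y k‖ ^ 2
      ≤ ∑' k, (2 * (W k * ‖x k‖ ^ 2) + 2 * (W k * ‖y k‖ ^ 2)) :=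
        Summable.tsum_le_tsum (fun k => mul_norm_sub_sq_le (hW k) _ _)
          (summable_mul_norm_sub_sq hW hx hy) ((hx.mul_left 2).add (hy.mul_left 2))
    _ = 2 * ∑' k, W k * ‖x k‖ ^ 2 + 2 * ∑' k, W k * ‖y k‖ ^ 2 := by
        rw [(hx.mul_left 2).tsum_add (hy.mul_left 2), tsum_mul_left, tsum_mul_left]
    _ ≤ 4 * C := by linarith

theorem tsum_mul_le_sum_add_mul_tsum {f : ι → ℝ} (hu : ∀ k, 0 ≤ u k) (hW : ∀ k, 0 ≤ W k)
    (hf : ∀ k, 0 ≤ f k) {F : Finset ι} {δ : ℝ} (hδ : 0 ≤ δ) (hF : ∀ k ∉ F, u k ≤ δ * W k)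
    (hWf : Summable fun k => W k * f k) :
    ∑' k, u k * f k ≤ ∑ k ∈ F, u k * f k + δ * ∑' k, W k * f k := by
  classical
  set g : ι → ℝ := fun k => if k ∈ F then u k * f k else 0
  have hg : Summable g := summable_of_ne_finset_zero fun k hk => if_neg hk
  have hbound : ∀ k, u k * f k ≤ g k + δ * (W k * f k) := by
    intro k
    by_cases hk : k ∈ F
    · simp only [g, if_pos hk]
      exact le_add_of_nonneg_right (mul_nonneg hδ (mul_nonneg (hW k) (hf k)))
    · simp only [g, if_neg hk, zero_add, ← mul_assoc]
      exact mul_le_mul_of_nonneg_right (hF k hk) (hf k)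
  have hsum := hg.add (hWf.mul_left δ)
  calc ∑' k, u k * f k ≤ ∑' k, (g k + δ * (W k * f k)) :=
        Summable.tsum_le_tsum hbound
          (.of_nonneg_of_le (fun k => mul_nonneg (hu k) (hf k)) hbound hsum) hsum
    _ = ∑ k ∈ F, u k * f k + δ * ∑' k, W k * f k := by
        rw [hg.tsum_add (hWf.mul_left δ), tsum_mul_left, tsum_eq_sum fun k hk => if_neg hk]
        exact congrArg (· + _) (Finset.sum_congr rfl fun k hk => if_pos hk)

theorem exists_finset_forall_notMem_le_mul (hW : ∀ k, 0 < W k)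
    (huW : Tendsto (fun k => u k / W k) cofinite (𝓝 0)) {δ : ℝ} (hδ : 0 < δ) :
    ∃ F : Finset ι, ∀ k ∉ F, u k ≤ δ * W k := by
  have hfin := eventually_cofinite.1 (huW.eventually (ge_mem_nhds hδ))
  refine ⟨hfin.toFinset, fun k hk => ?_⟩
  rw [Set.Finite.mem_toFinset, Set.mem_ofPred_eq, not_not, div_le_iff₀ (hW k)] at hk
  exact hk

theorem exists_strictMono_tendsto_tsum_mul_norm_sub_sq [Countable ι] [ProperSpace E]
    (hu : ∀ k, 0 ≤ u k) (hW : ∀ k, 0 < W k) (huW : Tendsto (fun k => u k / W k) cofinite (𝓝 0))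
    {C : ℝ} (x : ℕ → ι → E) (hs : ∀ n, Summable fun k => W k * ‖x n k‖ ^ 2)
    (hC : ∀ n, ∑' k, W k * ‖x n k‖ ^ 2 ≤ C) :
    ∃ φ : ℕ → ℕ, StrictMono φ ∧
      Tendsto (fun p : ℕ × ℕ => ∑' k, u k * ‖x (φ p.1) k - x (φ p.2) k‖ ^ 2) atTop (𝓝 0) := by
  obtain ⟨y, φ, hφ, hy⟩ := exists_strictMono_tendsto_pi_of_norm_le x _
    fun n => norm_le_sqrt_div_of_tsum_mul_norm_sq_le hW (hs n) (hC n)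
  refine ⟨φ, hφ, tendsto_order.2 ⟨fun a ha => .of_forall fun p =>
    ha.trans_le (tsum_nonneg fun k => mul_nonneg (hu k) (sq_nonneg _)), fun η hη => ?_⟩⟩
  have hsmall : ∀ᶠ δ in 𝓝[>] (0 : ℝ), δ * (4 * C) < η / 2 := nhdsWithin_le_nhds <|
    ((continuous_mul_const (4 * C)).tendsto' 0 0 (zero_mul _)).eventually
      (gt_mem_nhds (half_pos hη))
  obtain ⟨δ, hδη, hδ⟩ := (hsmall.and self_mem_nhdsWithin).exists
  obtain ⟨F, hF⟩ := exists_finset_forall_notMem_le_mul hW huW hδ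
  have hcoord : ∀ k, Tendsto (fun p : ℕ × ℕ => ‖x (φ p.1) k - x (φ p.2) k‖) atTop (𝓝 0) := by
    intro k
    simpa [dist_eq_norm] using
      cauchySeq_iff_tendsto_dist_atTop_0.1 (tendsto_pi_nhds.1 hy k).cauchySeq
  have hfin : Tendsto (fun p : ℕ × ℕ => ∑ k ∈ F, u k * ‖x (φ p.1) k - x (φ p.2) k‖ ^ 2)
      atTop (𝓝 0) := by
    simpa using tendsto_finsetSum F fun k _ => ((hcoord k).pow 2).const_mul (u k)
  filter_upwards [hfin.eventually (gt_mem_nhds (half_pos hη))] with p hp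
  calc ∑' k, u k * ‖x (φ p.1) k - x (φ p.2) k‖ ^ 2
      ≤ ∑ k ∈ F, u k * ‖x (φ p.1) k - x (φ p.2) k‖ ^ 2
          + δ * ∑' k, W k * ‖x (φ p.1) k - x (φ p.2) k‖ ^ 2 :=
        tsum_mul_le_sum_add_mul_tsum hu (fun k => (hW k).le) (fun k => sq_nonneg _) hδ.le hF
          (summable_mul_norm_sub_sq (fun k => (hW k).le) (hs _) (hs _))
    _ ≤ ∑ k ∈ F, u k * ‖x (φ p.1) k - x (φ p.2) k‖ ^ 2 + δ * (4 * C) := by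
        gcongr
        exact tsum_mul_norm_sub_sq_le (fun k => (hW k).le) (hs _) (hs _) (hC _) (hC _)
    _ < η := by linarith

end WeightedSum

theorem tendsto_rpow_div_rpow_add_one {ι : Type*} {l : Filter ι} {w : ι → ℝ}
    (hw : Tendsto w l atTop) (s : ℝ) : Tendsto (fun k => w k ^ s / w k ^ (s + 1)) l (𝓝 0) := by
  refine (tendsto_inv_atTop_zero.comp hw).congr' ?_
  filter_upwards [hw.eventually_gt_atTop 0] with k hk
  rw [Real.rpow_add_one hk.ne', div_mul_cancel_left₀ (Real.rpow_pos_of_pos hk s).ne',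
    Function.comp_apply]

theorem tendsto_one_add_abs_add_half_sq_cofinite :
    Tendsto (fun k : ℤ => 1 + |(k : ℝ) + 1 / 2| ^ 2) cofinite atTop := by
  have habs : Tendsto (fun k : ℤ => |(k : ℝ)|) cofinite atTop :=
    tendsto_norm_cocompact_atTop.comp Int.tendsto_coe_cofinite
  refine tendsto_atTop_mono (fun k => ?_) (tendsto_atTop_add_const_right _ (-1 / 2) habs)
  have h : |(k : ℝ)| ≤ |(k : ℝ) + 1 / 2| + 1 / 2 := by
    simpa using abs_sub ((k : ℝ) + 1 / 2) (1 / 2)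
  nlinarith [sq_nonneg (|(k : ℝ) + 1 / 2| - 1 / 2), abs_nonneg ((k : ℝ) + 1 / 2)]

theorem weighted_bounded_has_cauchy_subsequence_general
    (s C : ℝ) (a : ℕ → lp (fun _ : ℤ => ℂ) 2)
    (hsum : ∀ n : ℕ,
      Summable fun k : ℤ =>
        (1 + |(k : ℝ) + 1 / 2| ^ 2) ^ (s + 1) * ‖(a n : ∀ _ : ℤ, ℂ) k‖ ^ 2)
    (hbdd : ∀ n : ℕ,
      (∑' k : ℤ,
        (1 + |(k : ℝ) + 1 / 2| ^ 2) ^ (s + 1) * ‖(a n : ∀ _ : ℤ, ℂ) k‖ ^ 2) ≤ C) :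
    ∃ φ : ℕ → ℕ, StrictMono φ ∧
      ∀ ε : ℝ, 0 < ε → ∃ N : ℕ, ∀ m ≥ N, ∀ n ≥ N,
        Real.sqrt (∑' k : ℤ,
          (1 + |(k : ℝ) + 1 / 2| ^ 2) ^ s *
            ‖(a (φ m) : ∀ _ : ℤ, ℂ) k - (a (φ n) : ∀ _ : ℤ, ℂ) k‖ ^ 2) < ε := by
  obtain ⟨φ, hφ, hφD⟩ := exists_strictMono_tendsto_tsum_mul_norm_sub_sq
    (fun k => by positivity) (fun k => by positivity)
    (tendsto_rpow_div_rpow_add_one tendsto_one_add_abs_add_half_sq_cofinite s)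
    (fun n => ⇑(a n)) hsum hbdd
  refine ⟨φ, hφ, fun ε hε => ?_⟩
  obtain ⟨N, hN⟩ := eventually_atTop_prod_self'.1 (hφD.eventually (gt_mem_nhds (pow_pos hε 2)))
  exact ⟨N, fun m hm n hn => (Real.sqrt_lt' hε).2 (hN m hm n hn)⟩

/-- For every `s ∈ ℝ` and `C > 0`, any sequence `(a⁽ⁿ⁾)` in `ℓ²(ℤ)`
with `Σ_k (1+|k+1/2|²)^{s+1} |a⁽ⁿ⁾_k|² ≤ C` for all `n` has a subsequence that is Cauchy
for the norm `(Σ_k (1+|k+1/2|²)^s |a_k|²)^{1/2}`. -/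
theorem weighted_bounded_has_cauchy_subsequence
    (s C : ℝ) (hC : 0 < C) (a : ℕ → lp (fun _ : ℤ => ℂ) 2)
    (hsum : ∀ n : ℕ,
      Summable fun k : ℤ =>
        (1 + |(k : ℝ) + 1 / 2| ^ 2) ^ (s + 1) * ‖(a n : ∀ _ : ℤ, ℂ) k‖ ^ 2)
    (hbdd : ∀ n : ℕ,
      (∑' k : ℤ,
        (1 + |(k : ℝ) + 1 / 2| ^ 2) ^ (s + 1) * ‖(a n : ∀ _ : ℤ, ℂ) k‖ ^ 2) ≤ C) :
    ∃ φ : ℕ → ℕ, StrictMono φ ∧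
      ∀ ε : ℝ, 0 < ε → ∃ N : ℕ, ∀ m ≥ N, ∀ n ≥ N,
        Real.sqrt (∑' k : ℤ,
          (1 + |(k : ℝ) + 1 / 2| ^ 2) ^ s *
            ‖(a (φ m) : ∀ _ : ℤ, ℂ) k - (a (φ n) : ∀ _ : ℤ, ℂ) k‖ ^ 2) < ε :=
  weighted_bounded_has_cauchy_subsequence_general s C a hsum hbdd
end

section
/- The derivative at s = 0 of the (analytically continued) Hurwitz zeta function s ↦ ζ(s, 1/2) equals −(1/2)·log 2. -/
/-!
The L-function of the trivial Dirichlet character mod 2 is `2⁻ˢ ζ(s, 1/2)` by its construction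
from Hurwitz zeta functions, and `(1 - 2⁻ˢ) ζ(s)` by removing the Euler factor at 2; hence
`ζ(s, 1/2) = (2ˢ - 1) ζ(s)` for every `s ≠ 1`. Since `2ˢ - 1` vanishes at `0`, the product rule
gives the derivative `log 2 · ζ(0) = -(1/2) log 2` there.
-/

open Complex HurwitzZeta

theorem hurwitzZeta_half_eq_two_cpow_sub_one_mul_riemannZeta {s : ℂ} (hs : s ≠ 1) :
    hurwitzZeta ((1 / 2 : ℝ) : UnitAddCircle) s = (2 ^ s - 1) * riemannZeta s := by
  have h := DirichletCharacter.LFunctionTrivChar_eq_mul_riemannZeta (N := 2) hs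
  unfold DirichletCharacter.LFunctionTrivChar DirichletCharacter.LFunction ZMod.LFunction at h
  rw [Fintype.sum_eq_add 0 1 (by decide)
    (fun x hx => by fin_cases x; exacts [(hx.1 rfl).elim, (hx.2 rfl).elim])] at h
  have hχ₀ : (1 : DirichletCharacter ℂ 2) 0 = 0 := MulChar.map_nonunit _ not_isUnit_zero
  have hone : ZMod.toAddCircle (1 : ZMod 2) = ((1 / 2 : ℝ) : UnitAddCircle) := by
    rw [ZMod.toAddCircle_apply, ZMod.val_one]; norm_num
  simp only [hχ₀, hone, map_one, Nat.prime_two.primeFactors, zero_mul, zero_add, one_mul,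
    Finset.prod_singleton, Nat.cast_ofNat] at h
  have hinv : (2 : ℂ) ^ s * 2 ^ (-s) = 1 := by rw [← cpow_add _ _ two_ne_zero]; simp
  linear_combination 2 ^ s * h - (hurwitzZeta ((1 / 2 : ℝ) : UnitAddCircle) s + riemannZeta s) * hinv

theorem hasDerivAt_two_cpow_sub_one_mul_riemannZeta_zero :
    HasDerivAt (fun s : ℂ => (2 ^ s - 1) * riemannZeta s) (-(1 / 2) * Real.log 2) 0 := by
  refine (((hasStrictDerivAt_const_cpow (Or.inl two_ne_zero)).hasDerivAt.sub_const 1).fun_mul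
    (differentiableAt_riemannZeta zero_ne_one).hasDerivAt).congr_deriv ?_
  rw [riemannZeta_zero, cpow_zero, sub_self, zero_mul, add_zero, one_mul, ← ofReal_ofNat,
    ← ofReal_log zero_le_two]
  ring

/-- The derivative at `s = 0` of the analytically continued Hurwitz
zeta function `s ↦ ζ(s, 1/2)` equals `−(1/2)·log 2`. -/
theorem deriv_hurwitzZeta_half_at_zero :
    deriv (fun s : ℂ => HurwitzZeta.hurwitzZeta ((1 / 2 : ℝ) : UnitAddCircle) s) 0 =
      -(1 / 2 : ℂ) * (Real.log 2 : ℂ) := by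
  have hnear : (fun s : ℂ => hurwitzZeta ((1 / 2 : ℝ) : UnitAddCircle) s)
      =ᶠ[nhds 0] fun s => (2 ^ s - 1) * riemannZeta s :=
    (eventually_ne_nhds zero_ne_one).mono fun _ hs =>
      hurwitzZeta_half_eq_two_cpow_sub_one_mul_riemannZeta hs
  exact (hasDerivAt_two_cpow_sub_one_mul_riemannZeta_zero.congr_of_eventuallyEq hnear).deriv
end
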